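/- Fix (i,k) with i' < k and regard R⁻_{ik}(X,Y) as a polynomial in the 2n² variables x_{ab}, y_{ab}. Then R⁻_{ik}(X,Y) = f₀·x_{ik} + f₁, where f₀ and f₁ are polynomials involving only the variables y_{ab} and the variables x_{ab} with (a,b) ≺ (i,k), and f₀ is a nonzero polynomial. (Order on pairs: (a,b) ≺ (i,k) iff b < k, or b = k and a > i.) -/

import Mathlib

/-!
Expand the determinant along its first row, which is row `i` of `X`. Its last entry is `x_{ik}`,
whose cofactor `f₀` is, up to sign, the minor on the remaining rows and the first `k - 1` columns.
Every other entry is `x_{ib}` with `b < k`, an entry of a later row of `X`, or an entry of `Y`,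
so all of them precede `x_{ik}`. That minor is the determinant of a matrix of pairwise distinct
variables, i.e. of an injective renaming of the generic matrix, so it is nonzero.
-/

open Matrix

/-- Entry of an `n × n` matrix in 1-based indexing; `0` outside the range `[1,n]²`. -/
def ent {R : Type*} [Zero R] {n : ℕ} (X : Matrix (Fin n) (Fin n) R) (a b : ℕ) : R :=
  if h : 1 ≤ a ∧ a ≤ n ∧ 1 ≤ b ∧ b ≤ n then X ⟨a - 1, by omega⟩ ⟨b - 1, by omega⟩ else 0

/-- `Dmin k X`: the left lower corner minor of order `n - k + 1`;
rows `k,…,n`, columns `1,…,n-k+1` (1-based). -/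
noncomputable def Dmin {R : Type*} [CommRing R] {n : ℕ} (k : ℕ)
    (X : Matrix (Fin n) (Fin n) R) : R :=
  (Matrix.of fun r c : Fin (n + 1 - k) => ent X (k + r.val) (1 + c.val)).det

/-- `Mmin i j X`: minor of order `n - i + 1` with rows `i,…,n` and
columns `1,…,n-i` together with column `j` (1-based). -/
noncomputable def Mmin {R : Type*} [CommRing R] {n : ℕ} (i j : ℕ)
    (X : Matrix (Fin n) (Fin n) R) : R :=
  (Matrix.of fun r c : Fin (n + 1 - i) =>
    ent X (i + r.val) (if c.val < n - i then 1 + c.val else j)).det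

/-- `Nmin j k Y`: minor of order `n - k + 1` with rows `{j} ∪ {k+1,…,n}` and
columns `1,…,n-k+1` (1-based). -/
noncomputable def Nmin {R : Type*} [CommRing R] {n : ℕ} (j k : ℕ)
    (Y : Matrix (Fin n) (Fin n) R) : R :=
  (Matrix.of fun r c : Fin (n + 1 - k) =>
    ent Y (if r.val = 0 then j else k + r.val) (1 + c.val)).det

/-- `Pmin i k X Y = Σ_{j=i'}^{k} M_{ij}(X) N_{jk}(Y)`, where `i' = n - i + 1`. -/
noncomputable def Pmin {R : Type*} [CommRing R] {n : ℕ} (i k : ℕ)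
    (X Y : Matrix (Fin n) (Fin n) R) : R :=
  ∑ j ∈ Finset.Icc (n + 1 - i) k, Mmin i j X * Nmin j k Y

/-- `Rminus i k X Y`: determinant of the `k × k` matrix whose first `n - i + 1` rows are
rows `i,…,n` of `X` restricted to columns `1,…,k`, and whose remaining rows are the last
`k - (n - i + 1)` rows of `Y` restricted to columns `1,…,k`. -/
noncomputable def Rminus {R : Type*} [CommRing R] {n : ℕ} (i k : ℕ)
    (X Y : Matrix (Fin n) (Fin n) R) : R :=
  (Matrix.of fun r c : Fin k =>
    if r.val < n + 1 - i then ent X (i + r.val) (1 + c.val)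
    else ent Y (n - k + 1 + r.val) (1 + c.val)).det

/-- `Rplus i k Z X`: determinant of the `(n-i+1) × (n-i+1)` matrix whose first
`(n-i+1) - k` columns are columns `1,…,(n-i+1)-k` of `Z` restricted to rows `i,…,n`,
and whose last `k` columns are columns `1,…,k` of `X` restricted to rows `i,…,n`. -/
noncomputable def Rplus {R : Type*} [CommRing R] {n : ℕ} (i k : ℕ)
    (Z X : Matrix (Fin n) (Fin n) R) : R :=
  (Matrix.of fun r c : Fin (n + 1 - i) =>
    if c.val < n + 1 - i - k then ent Z (i + r.val) (1 + c.val)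
    else ent X (i + r.val) (c.val - (n + 1 - i - k) + 1)).det

/-- Square minor of order `m` with rows `r₀, r₀+1, …` and columns `c₀, c₀+1, …` (1-based). -/
noncomputable def RectMinor {R : Type*} [CommRing R] {n : ℕ} (r₀ c₀ m : ℕ)
    (X : Matrix (Fin n) (Fin n) R) : R :=
  (Matrix.of fun r c : Fin m => ent X (r₀ + r.val) (c₀ + c.val)).det

/-- `u` is upper triangular with ones on the diagonal. -/
def IsUT {R : Type*} [CommRing R] {n : ℕ} (u : Matrix (Fin n) (Fin n) R) : Prop :=
  (∀ i, u i i = 1) ∧ ∀ i j : Fin n, (j : ℕ) < (i : ℕ) → u i j = 0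

/-- Anti-diagonal matrix: entries off the anti-diagonal vanish (0-based: `a + b = n - 1`). -/
def AntiDiag {R : Type*} [Zero R] {n : ℕ} (X : Matrix (Fin n) (Fin n) R) : Prop :=
  ∀ a b : Fin n, (a : ℕ) + (b : ℕ) ≠ n - 1 → X a b = 0

/-- Lower anti-triangular: entries above the anti-diagonal vanish. -/
def LowerAnti {R : Type*} [Zero R] {n : ℕ} (X : Matrix (Fin n) (Fin n) R) : Prop :=
  ∀ a b : Fin n, (a : ℕ) + (b : ℕ) < n - 1 → X a b = 0

/-- Upper anti-triangular: entries below the anti-diagonal vanish. -/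
def UpperAnti {R : Type*} [Zero R] {n : ℕ} (X : Matrix (Fin n) (Fin n) R) : Prop :=
  ∀ a b : Fin n, n - 1 < (a : ℕ) + (b : ℕ) → X a b = 0

open MvPolynomial

section DetMem

variable {R S : Type*} [CommRing R] [SetLike S R] [SubringClass S R] (s : S)

theorem Matrix.det_mem {ι : Type*} [Fintype ι] [DecidableEq ι] (M : Matrix ι ι R)
    (hM : ∀ r c, M r c ∈ s) : M.det ∈ s := by
  have hmap : M = (Matrix.of fun r c => (⟨M r c, hM r c⟩ : s)).map (SubringClass.subtype s) :=
    rfl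
  rw [hmap, ← RingHom.mapMatrix_apply, ← RingHom.map_det]
  exact SetLike.coe_mem _

theorem Matrix.exists_det_succ_eq_mul_add_of_mem {m : ℕ}
    (M : Matrix (Fin (m + 1)) (Fin (m + 1)) R)
    (hM : ∀ r c, (r, c) ≠ (0, Fin.last m) → M r c ∈ s) :
    ∃ f ∈ s,
      M.det = (-1) ^ m * (M.submatrix Fin.succ Fin.castSucc).det * M 0 (Fin.last m) + f := by
  classical
  refine ⟨∑ j ∈ Finset.univ.erase (Fin.last m),
    (-1) ^ (j : ℕ) * M 0 j * (M.submatrix Fin.succ j.succAbove).det, ?_, ?_⟩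
  · refine sum_mem fun j hj => mul_mem (mul_mem (pow_mem (neg_mem (one_mem s)) _) ?_) ?_
    · exact hM 0 j (by simpa using Finset.ne_of_mem_erase hj)
    · exact Matrix.det_mem s _ fun r c => hM _ _ (by simp [Fin.succ_ne_zero])
  · rw [Matrix.det_succ_row_zero, ← Finset.sum_erase_add _ _ (Finset.mem_univ (Fin.last m)),
      Fin.succAbove_last, Fin.val_last]
    ring

end DetMem

theorem MvPolynomial.det_of_X_ne_zero {σ R ι : Type*} [CommRing R] [Nontrivial R] [Fintype ι]
    [DecidableEq ι] (E : ι → ι → σ) (hE : Function.Injective (Function.uncurry E)) :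
    (Matrix.of fun r c => (X (E r c) : MvPolynomial σ R)).det ≠ 0 := by
  have hmap : (Matrix.of fun r c => (X (E r c) : MvPolynomial σ R)) =
      (Matrix.mvPolynomialX ι ι R).map (rename (Function.uncurry E)) := by
    ext; simp
  rw [hmap, ← AlgHom.coe_toRingHom, ← RingHom.mapMatrix_apply, ← RingHom.map_det,
    AlgHom.coe_toRingHom, map_ne_zero_iff _ (rename_injective _ hE)]
  exact Matrix.det_mvPolynomialX_ne_zero ι R

section Rminus

variable {n i k : ℕ}

/-- In 0-based `Fin` indices: every `y` variable, and `x_{ab}` with `(a+1, b+1) ≺ (i, k)`. -/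
def PrecedesVar (i k : ℕ) : (Fin n × Fin n) ⊕ (Fin n × Fin n) → Prop :=
  Sum.elim (fun p => (p.2 : ℕ) + 1 < k ∨ ((p.2 : ℕ) + 1 = k ∧ i < (p.1 : ℕ) + 1))
    fun _ => True

def rminusVar (hi : 1 ≤ i) (hk : k ≤ n) (r c : Fin k) : (Fin n × Fin n) ⊕ (Fin n × Fin n) :=
  if h : r.val < n + 1 - i then Sum.inl (⟨i - 1 + r, by omega⟩, ⟨c, by omega⟩)
  else Sum.inr (⟨n - k + r, by omega⟩, ⟨c, by omega⟩)

variable {K : Type*} [CommRing K] (hi : 1 ≤ i) (hk : k ≤ n)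

theorem Rminus_X_eq_det :
    Rminus i k (Matrix.of fun a b : Fin n => (X (Sum.inl (a, b)) : MvPolynomial _ K))
        (Matrix.of fun a b : Fin n => X (Sum.inr (a, b))) =
      (Matrix.of fun r c => X (rminusVar hi hk r c)).det := by
  refine congrArg Matrix.det (Matrix.ext fun r c => ?_)
  have := r.is_lt
  have := c.is_lt
  simp only [rminusVar, Matrix.of_apply]
  split_ifs <;> rw [ent, dif_pos (by omega), Matrix.of_apply] <;>
    congr 3 <;> ext <;> dsimp only <;> omega

theorem rminusVar_injective : Function.Injective (Function.uncurry (rminusVar hi hk)) := by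
  rintro ⟨r, c⟩ ⟨r', c'⟩ h
  simp only [Function.uncurry_apply_pair, rminusVar] at h
  simp only [Prod.mk.injEq, Fin.ext_iff]
  split_ifs at h <;> simp only [Sum.inl.injEq, Sum.inr.injEq, Prod.mk.injEq,
    Fin.mk.injEq] at h <;> exact ⟨by omega, h.2⟩

theorem rminusVar_of_val_eq_zero (hi' : i ≤ n) {r : Fin k} (hr : (r : ℕ) = 0) (c : Fin k) :
    rminusVar hi hk r c = Sum.inl (⟨i - 1, by omega⟩, ⟨c, c.2.trans_le hk⟩) := by
  simp only [rminusVar, hr, add_zero, dif_pos (show 0 < n + 1 - i by omega)]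

theorem precedesVar_rminusVar (r c : Fin k) (hrc : 0 < (r : ℕ) ∨ (c : ℕ) + 1 < k) :
    PrecedesVar i k (rminusVar hi hk r c) := by
  have := c.is_lt
  unfold rminusVar
  split_ifs
  · simp only [PrecedesVar, Sum.elim_inl]
    omega
  · trivial

end Rminus

open MvPolynomial in
/-- regarded as a polynomial in the `2n²` variables `x_{ab}, y_{ab}`,
`R⁻_{ik}(X,Y) = f₀ · x_{ik} + f₁` where `f₀ ≠ 0` and `f₀, f₁` involve only the
variables `y_{ab}` and the variables `x_{ab}` with `(a,b) ≺ (i,k)`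
(`(a,b) ≺ (i,k)` iff `b < k`, or `b = k` and `a > i`). -/
theorem Rminus_triangular {K : Type*} [Field K] {n : ℕ}
    (i k : ℕ) (hi1 : 1 ≤ i) (hi2 : i ≤ n) (hk : k ≤ n) (hik : n + 1 - i < k) :
    ∃ f₀ f₁ : MvPolynomial ((Fin n × Fin n) ⊕ (Fin n × Fin n)) K,
      f₀ ≠ 0 ∧
      Rminus i k
          (Matrix.of fun a b : Fin n => (X (Sum.inl (a, b)) : MvPolynomial _ K))
          (Matrix.of fun a b : Fin n => (X (Sum.inr (a, b)) : MvPolynomial _ K))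
        = f₀ * X (Sum.inl (⟨i - 1, by omega⟩, ⟨k - 1, by omega⟩)) + f₁ ∧
      (∀ v ∈ f₀.vars,
        Sum.elim (fun p : Fin n × Fin n =>
          (p.2 : ℕ) + 1 < k ∨ ((p.2 : ℕ) + 1 = k ∧ i < (p.1 : ℕ) + 1)) (fun _ => True) v) ∧
      (∀ v ∈ f₁.vars,
        Sum.elim (fun p : Fin n × Fin n =>
          (p.2 : ℕ) + 1 < k ∨ ((p.2 : ℕ) + 1 = k ∧ i < (p.1 : ℕ) + 1)) (fun _ => True) v) := by
  obtain ⟨m, rfl⟩ : ∃ m, k = m + 1 := ⟨k - 1, by omega⟩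
  set S := supported K {v | PrecedesVar (n := n) i (m + 1) v}
  set M := Matrix.of fun r c => (X (rminusVar hi1 hk r c) : MvPolynomial _ K)
  have hM : ∀ r c, (r, c) ≠ (0, Fin.last m) → M r c ∈ S := by
    intro r c hrc
    show X _ ∈ S
    rw [mem_supported, vars_X, Finset.coe_singleton, Set.singleton_subset_iff]
    refine precedesVar_rminusVar hi1 hk r c ?_
    simp only [ne_eq, Prod.mk.injEq, Fin.ext_iff, Fin.val_zero, Fin.val_last] at hrc
    omega
  obtain ⟨f₁, hf₁, hexp⟩ := M.exists_det_succ_eq_mul_add_of_mem S hM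
  have hminor := Matrix.det_mem S (M.submatrix Fin.succ Fin.castSucc) fun r c =>
    hM _ _ (by simp [Fin.succ_ne_zero])
  refine ⟨(-1) ^ m * (M.submatrix Fin.succ Fin.castSucc).det, f₁, ?_, ?_, fun v hv => ?_,
    fun v hv => mem_supported.mp hf₁ hv⟩
  · refine mul_ne_zero (pow_ne_zero _ (neg_ne_zero.mpr one_ne_zero)) ?_
    exact det_of_X_ne_zero _ ((rminusVar_injective hi1 hk).comp
      ((Fin.succ_injective _).prodMap (Fin.castSucc_injective _)))
  · rw [Rminus_X_eq_det hi1 hk, hexp]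
    exact congrArg (_ * X · + f₁) (rminusVar_of_val_eq_zero hi1 hk hi2 (Fin.val_zero _) _)
  · exact mem_supported.mp (mul_mem (pow_mem (neg_mem (one_mem S)) _) hminor) hv
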